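/- For every nonnegative integer n and every real t > 0, the Bessel functions of integer order satisfy (1/n!) (2/t)^n J_n(t) = Σ_{k=0}^{n} ε_k · J_{2k}(t) / ((n+k)! (n-k)!), where ε_0 = 1 and ε_k = 2 for k ≥ 1. -/

import Mathlib

/-!
Both sides are power series in `x = t/2`. The coefficient of `x^(2m)` on the left is
`(-1)^m / (n! m! (n+m)!)`, and after multiplying by `((n+m)!)^2` the comparison of
coefficients becomes, with `N = n + m`,
`Σ_{k ≤ n} ε_k (-1)^k C(N, n+k) C(N, n-k) = C(N, n)`.
Pairing the indices `n - k` and `n + k` unfolds the `ε`-weighted sum into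
`(-1)^n Σ_{j ≤ 2n} (-1)^j C(N, j) C(N, 2n-j)`, which is `(-1)^n` times the coefficient of
`X^(2n)` in `(1 - X)^N (1 + X)^N = (1 - X^2)^N`, namely `C(N, n)`.
-/

open Finset

noncomputable section

/-- The Bessel function of the first kind of order `ν`:
`J_ν(t) = (t/2)^ν Σ_{k=0}^∞ (-1)^k/(Γ(k+1)Γ(k+ν+1)) (t/2)^{2k}`. -/
def besselJ (ν t : ℝ) : ℝ :=
  (t / 2) ^ ν *
    ∑' k : ℕ, (-1) ^ k / (Real.Gamma (k + 1) * Real.Gamma (k + ν + 1)) * (t / 2) ^ (2 * k)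

open Polynomial Nat

theorem Polynomial.coeff_one_sub_X_pow (R : Type*) [CommRing R] (N j : ℕ) :
    ((1 - X : R[X]) ^ N).coeff j = (-1) ^ j * N.choose j := by
  have h : (1 - X : R[X]) ^ N = ((1 + X) ^ N).comp (C (-1) * X) := by
    simp [sub_eq_add_neg]
  rw [h, comp_C_mul_X_coeff, coeff_one_add_X_pow, mul_comm]

theorem Polynomial.coeff_one_sub_X_sq_pow_two_mul (R : Type*) [CommRing R] (N n : ℕ) :
    ((1 - X ^ 2 : R[X]) ^ N).coeff (2 * n) = (-1) ^ n * N.choose n := by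
  have h : (1 - X ^ 2 : R[X]) ^ N = expand R 2 ((1 - X) ^ N) := by simp
  rw [h, mul_comm, coeff_expand_mul two_pos, coeff_one_sub_X_pow]

theorem sum_range_neg_one_pow_mul_choose_mul_choose (R : Type*) [CommRing R] (N n : ℕ) :
    ∑ j ∈ range (2 * n + 1), (-1 : R) ^ j * N.choose j * N.choose (2 * n - j) =
      (-1) ^ n * N.choose n := by
  rw [← coeff_one_sub_X_sq_pow_two_mul R, show (1 - X ^ 2 : R[X]) = (1 - X) * (1 + X) by ring,
    mul_pow, coeff_mul, Nat.sum_antidiagonal_eq_sum_range_succ_mk]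
  simp only [coeff_one_sub_X_pow, coeff_one_add_X_pow]

theorem Finset.sum_range_two_mul_add_one_of_symm {R : Type*} [Semiring R] (f : ℕ → R) (n : ℕ)
    (hf : ∀ k ≤ n, f (n - k) = f (n + k)) :
    ∑ j ∈ range (2 * n + 1), f j =
      ∑ k ∈ range (n + 1), (if k = 0 then 1 else 2) * f (n + k) := by
  rw [two_mul, add_assoc, sum_range_add, ← sum_range_reflect, sum_range_succ' _ n,
    sum_range_succ' (fun k => (if k = 0 then 1 else 2) * f (n + k))]
  have hrefl : ∀ j ∈ range n, f (n - 1 - j) = f (n + (j + 1)) := fun j hj => by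
    rw [← hf (j + 1) (by simp at hj; omega)]; congr 1; omega
  simp only [sum_congr rfl hrefl, if_pos, if_neg (succ_ne_zero _), two_mul, one_mul,
    sum_add_distrib, add_assoc]

theorem sum_range_mul_neg_one_pow_mul_choose_add_mul_choose_sub (R : Type*) [CommRing R]
    (N n : ℕ) :
    ∑ k ∈ range (n + 1),
        (if k = 0 then 1 else 2) * ((-1 : R) ^ k * N.choose (n + k) * N.choose (n - k)) =
      N.choose n := by
  have h := sum_range_neg_one_pow_mul_choose_mul_choose R N n
  rw [sum_range_two_mul_add_one_of_symm] at h
  · refine ((isUnit_neg_one (α := R)).pow n).mul_left_cancel ?_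
    rw [← h, mul_sum]
    refine sum_congr rfl fun k _ => ?_
    rw [show 2 * n - (n + k) = n - k by omega, pow_add]
    ring
  · intro k hk
    obtain ⟨j, rfl⟩ := exists_add_of_le hk
    rw [show k + j - k = j by omega, show 2 * (k + j) - j = k + j + k by omega,
      show 2 * (k + j) - (k + j + k) = j by omega, show k + j + k = j + 2 * k by omega,
      pow_add, pow_mul, neg_one_sq, one_pow, mul_one]
    ring

def besselCoeff (n m : ℕ) : ℝ := (-1) ^ m / (m ! * (m + n)!)

theorem besselCoeff_div_factorial_eq_sum (n m : ℕ) :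
    besselCoeff n m / n ! = ∑ k ∈ range (n + 1), (if k = 0 then 1 else 2) *
      ((if k ≤ m then besselCoeff (2 * k) (m - k) else 0) / ((n + k)! * (n - k)!)) := by
  have hterm : ∀ k ∈ range (n + 1),
      (if k ≤ m then besselCoeff (2 * k) (m - k) else 0) / ((n + k)! * (n - k)!) =
        (-1) ^ m / ((n + m)! : ℝ) ^ 2 *
          ((-1 : ℝ) ^ k * (n + m).choose (n + k) * (n + m).choose (n - k)) := by
    intro k hk
    have hkn : k ≤ n := by simpa [Nat.lt_succ_iff] using hk
    by_cases hkm : k ≤ m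
    · obtain ⟨j, rfl⟩ := exists_add_of_le hkm
      rw [if_pos hkm, Nat.cast_choose ℝ (by omega : n + k ≤ n + (k + j)),
        Nat.cast_choose ℝ (by omega : n - k ≤ n + (k + j)),
        show n + (k + j) - (n + k) = j by omega, show n + (k + j) - (n - k) = j + 2 * k by omega,
        show k + j - k = j by omega, besselCoeff]
      field_simp
      rw [pow_add, mul_right_comm, ← pow_add, Even.neg_one_pow ⟨k, rfl⟩, one_mul]
    · rw [if_neg hkm, Nat.choose_eq_zero_of_lt (by omega : n + m < n + k)]
      simp
  rw [sum_congr rfl fun k hk => by rw [hterm k hk, mul_left_comm], ← mul_sum,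
    sum_range_mul_neg_one_pow_mul_choose_add_mul_choose_sub,
    Nat.cast_choose ℝ (Nat.le_add_right n m), Nat.add_sub_cancel_left, besselCoeff, add_comm m n]
  field_simp

theorem summable_besselCoeff_mul_pow (n : ℕ) (x : ℝ) :
    Summable fun m => besselCoeff n m * x ^ (2 * m) := by
  refine Summable.of_norm_bounded (Real.summable_pow_div_factorial (x ^ 2)) fun m => ?_
  rw [besselCoeff, norm_mul, norm_div, norm_pow, norm_neg, norm_one, one_pow, pow_mul, norm_pow,
    Real.norm_of_nonneg (sq_nonneg x), Real.norm_of_nonneg (by positivity), one_div_mul_eq_div]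
  gcongr
  exact le_mul_of_one_le_right (by positivity) (mod_cast (m + n).factorial_pos)

theorem besselJ_natCast (n : ℕ) (t : ℝ) :
    besselJ n t = (t / 2) ^ n * ∑' m, besselCoeff n m * (t / 2) ^ (2 * m) := by
  rw [besselJ, Real.rpow_natCast]
  congr 2 with m
  rw [besselCoeff, Real.Gamma_nat_eq_factorial, ← Nat.cast_add, Real.Gamma_nat_eq_factorial]

theorem hasSum_besselJ_natCast (n : ℕ) (t : ℝ) :
    HasSum (fun m => (t / 2) ^ n * (besselCoeff n m * (t / 2) ^ (2 * m))) (besselJ n t) := by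
  rw [besselJ_natCast]
  exact (summable_besselCoeff_mul_pow n (t / 2)).hasSum.mul_left _

theorem hasSum_besselJ_two_mul (k : ℕ) (t : ℝ) :
    HasSum (fun m => (if k ≤ m then besselCoeff (2 * k) (m - k) else 0) * (t / 2) ^ (2 * m))
      (besselJ (2 * k : ℕ) t) := by
  refine (hasSum_nat_add_iff' k).mp ?_
  rw [sum_eq_zero fun i hi => by simp [not_le.mpr (mem_range.mp hi)], sub_zero]
  refine (hasSum_besselJ_natCast (2 * k) t).congr_fun fun m => ?_
  rw [if_pos (Nat.le_add_left k m), Nat.add_sub_cancel]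
  ring

/-- **Finite expansion of Bessel functions of integer order (Corollary 3).** For every
`n ≥ 0` and `t > 0`:
`(1/n!)(2/t)^n J_n(t) = Σ_{k=0}^{n} ε_k J_{2k}(t)/((n+k)!(n-k)!)` with `ε_0 = 1` and
`ε_k = 2` for `k ≥ 1`. -/
theorem bessel_integer_order_finite_expansion (n : ℕ) (t : ℝ) (ht : 0 < t) :
    (1 / (Nat.factorial n : ℝ)) * (2 / t) ^ n * besselJ (n : ℝ) t =
      ∑ k ∈ Finset.range (n + 1),
        (if k = 0 then (1 : ℝ) else 2) * besselJ ((2 * k : ℕ) : ℝ) t /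
          ((Nat.factorial (n + k)) * (Nat.factorial (n - k))) := by
  have hscale : (2 / t) ^ n * (t / 2) ^ n = 1 := by
    rw [← mul_pow, div_mul_div_cancel₀' two_ne_zero, div_self ht.ne', one_pow]
  have hL := (hasSum_besselJ_natCast n t).mul_left (1 / n ! * (2 / t) ^ n)
  have hR := hasSum_sum fun k (_ : k ∈ range (n + 1)) =>
    ((hasSum_besselJ_two_mul k t).mul_left (if k = 0 then (1 : ℝ) else 2)).div_const
      ((n + k)! * (n - k)! : ℝ)
  refine hL.unique (hR.congr_fun fun m => ?_)
  calc 1 / n ! * (2 / t) ^ n * ((t / 2) ^ n * (besselCoeff n m * (t / 2) ^ (2 * m)))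
      = besselCoeff n m / n ! * (t / 2) ^ (2 * m) := by
        linear_combination (besselCoeff n m / n ! * (t / 2) ^ (2 * m)) * hscale
    _ = _ := by
        rw [besselCoeff_div_factorial_eq_sum, sum_mul]
        exact sum_congr rfl fun k _ => by ring

end
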